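/- Let H(x) = 2/(π(1+x²)²) and define I₀(f,g) = ∫∫_{ℝ²} f(x)g(y)|x−y|²log|x−y| dx dy. Then I₀(H,H) = 2·log 2 + 1. -/

import Mathlib

noncomputable def Hfun (x : ℝ) : ℝ := 2 / (Real.pi * (1 + x^2)^2)

/-!
Substitute `y = tan θ`: then `Hfun y dy = (2/π) cos² θ dθ`, and with `r = √(1 + x²)` and a suitable
phase `φ` one has `x - tan θ = r cos (θ + φ) / cos θ`. By π-periodicity the shift by `φ` disappears,
so the inner integral reduces to `∫ cos²`, `∫ log cos` and `∫ cos² log cos` over `(-π/2, π/2)`,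
the last one obtained from the antiderivative of `cos 2θ log cos θ`. This gives the inner integral
`(1 + x²)/2 · log (1 + x²) + 1`, and a second tangent substitution gives the outer one.
-/

open Real Set intervalIntegral
open MeasureTheory (volume)

theorem integral_eq_intervalIntegral_comp_tan {E : Type*} [NormedAddCommGroup E]
    [NormedSpace ℝ E] (g : ℝ → E) :
    ∫ x, g x = ∫ θ in -(π / 2)..π / 2, (cos θ ^ 2)⁻¹ • g (tan θ) := by
  rw [← MeasureTheory.setIntegral_univ, ← image_tan_Ioo,
    MeasureTheory.integral_image_eq_integral_abs_deriv_smul measurableSet_Ioo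
      (fun θ hθ => (hasDerivAt_tan (cos_pos_of_mem_Ioo hθ).ne').hasDerivWithinAt) injOn_tan g,
    integral_of_le (by linarith [pi_pos]), MeasureTheory.integral_Ioc_eq_integral_Ioo]
  refine MeasureTheory.setIntegral_congr_fun measurableSet_Ioo fun θ _ => ?_
  rw [abs_of_nonneg (by positivity), one_div]

theorem exists_mul_cos_sub_mul_sin_eq (a b : ℝ) :
    ∃ φ, ∀ θ, a * cos θ - b * sin θ = √(a ^ 2 + b ^ 2) * cos (θ + φ) := by
  refine ⟨Complex.arg ⟨a, b⟩, fun θ => ?_⟩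
  have hnorm : ‖(⟨a, b⟩ : ℂ)‖ = √(a ^ 2 + b ^ 2) := by
    rw [Complex.norm_def, Complex.normSq_mk]; ring_nf
  have hre : ‖(⟨a, b⟩ : ℂ)‖ * cos (Complex.arg ⟨a, b⟩) = a := Complex.norm_mul_cos_arg _
  have him : ‖(⟨a, b⟩ : ℂ)‖ * sin (Complex.arg ⟨a, b⟩) = b := Complex.norm_mul_sin_arg _
  rw [cos_add, ← hnorm]
  linear_combination (-cos θ) * hre + sin θ * him

theorem integral_log_cos_neg_pi_div_two_pi_div_two :
    ∫ θ in -(π / 2)..π / 2, log (cos θ) = -π * log 2 := by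
  have h := integral_comp_add_right (fun x => log (sin x)) (π / 2) (a := -(π / 2)) (b := π / 2)
  simp only [sin_add_pi_div_two, neg_add_cancel, add_halves] at h
  rw [h, integral_log_sin_zero_pi]
  ring

theorem intervalIntegrable_mul_log_cos {c : ℝ → ℝ} (hc : Continuous c) (a b : ℝ) :
    IntervalIntegrable (fun θ => c θ * log (cos θ)) volume a b :=
  intervalIntegrable_log_cos.continuousOn_mul hc.continuousOn

theorem integral_cos_sq_sub_sin_sq_mul_log_cos :
    ∫ θ in -(π / 2)..π / 2, (cos θ ^ 2 - sin θ ^ 2) * log (cos θ) = π / 2 := by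
  let F : ℝ → ℝ := fun θ => sin θ * (cos θ * log (cos θ)) + θ / 2 - sin θ * cos θ / 2
  have hF : Continuous F := by
    have := continuous_mul_log.comp continuous_cos
    fun_prop
  have hF' : ∀ θ ∈ Ioo (-(π / 2)) (π / 2),
      HasDerivAt F ((cos θ ^ 2 - sin θ ^ 2) * log (cos θ)) θ := by
    intro θ hθ
    have hc := (cos_pos_of_mem_Ioo hθ).ne'
    have := (((hasDerivAt_sin θ).mul ((hasDerivAt_cos θ).mul ((hasDerivAt_cos θ).log hc))).add
      ((hasDerivAt_id θ).div_const 2)).sub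
      (((hasDerivAt_sin θ).mul (hasDerivAt_cos θ)).div_const 2)
    refine this.congr_deriv ?_
    simp only [Pi.mul_apply]
    field_simp
    linear_combination -sin_sq_add_cos_sq θ
  rw [integral_eq_sub_of_hasDerivAt_of_le (by linarith [pi_pos]) hF.continuousOn hF'
    (intervalIntegrable_mul_log_cos (by fun_prop) _ _)]
  simp only [F, sin_pi_div_two, cos_pi_div_two, sin_neg, cos_neg, log_zero, mul_zero, zero_add,
    zero_div, sub_zero]
  ring

theorem integral_cos_sq_mul_log_cos :
    ∫ θ in -(π / 2)..π / 2, cos θ ^ 2 * log (cos θ) = π / 4 - π / 2 * log 2 := by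
  have h : ∀ θ, cos θ ^ 2 * log (cos θ)
      = ((cos θ ^ 2 - sin θ ^ 2) * log (cos θ) + log (cos θ)) / 2 := fun θ => by
    linear_combination log (cos θ) / 2 * sin_sq_add_cos_sq θ
  rw [funext h, integral_div, integral_add (g := fun θ => log (cos θ))
    (intervalIntegrable_mul_log_cos (by fun_prop) _ _) intervalIntegrable_log_cos,
    integral_cos_sq_sub_sin_sq_mul_log_cos, integral_log_cos_neg_pi_div_two_pi_div_two]
  ring

theorem integral_sin_sq_mul_log_cos :
    ∫ θ in -(π / 2)..π / 2, sin θ ^ 2 * log (cos θ) = -(π / 4) - π / 2 * log 2 := by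
  have h : ∀ θ, sin θ ^ 2 * log (cos θ) = log (cos θ) - cos θ ^ 2 * log (cos θ) :=
    fun θ => by linear_combination log (cos θ) * sin_sq_add_cos_sq θ
  rw [funext h, integral_sub (f := fun θ => log (cos θ)) intervalIntegrable_log_cos
    (intervalIntegrable_mul_log_cos (by fun_prop) _ _), integral_cos_sq_mul_log_cos,
    integral_log_cos_neg_pi_div_two_pi_div_two]
  ring

theorem integral_mul_cos_sub_mul_sin_sq_mul_log_cos (a b : ℝ) :
    ∫ θ in -(π / 2)..π / 2, (a * cos θ - b * sin θ) ^ 2 * log (cos θ)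
      = a ^ 2 * (π / 4 - π / 2 * log 2) + b ^ 2 * (-(π / 4) - π / 2 * log 2) := by
  have h_odd : ∫ θ in -(π / 2)..π / 2, sin θ * cos θ * log (cos θ) = 0 := by
    have h := integral_comp_neg (a := -(π / 2)) (b := π / 2)
      fun θ => sin θ * cos θ * log (cos θ)
    simp only [sin_neg, cos_neg, neg_neg, neg_mul, integral_neg] at h
    linarith
  have h : ∀ θ, (a * cos θ - b * sin θ) ^ 2 * log (cos θ)
      = a ^ 2 * (cos θ ^ 2 * log (cos θ)) + b ^ 2 * (sin θ ^ 2 * log (cos θ))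
        - 2 * a * b * (sin θ * cos θ * log (cos θ)) := fun θ => by ring
  have hcos := intervalIntegrable_mul_log_cos (c := fun θ => cos θ ^ 2) (by fun_prop)
    (-(π / 2)) (π / 2)
  have hsin := intervalIntegrable_mul_log_cos (c := fun θ => sin θ ^ 2) (by fun_prop)
    (-(π / 2)) (π / 2)
  have hsc := intervalIntegrable_mul_log_cos (c := fun θ => sin θ * cos θ) (by fun_prop)
    (-(π / 2)) (π / 2)
  rw [funext h, integral_sub ((hcos.const_mul _).add (hsin.const_mul _)) (hsc.const_mul _),
    integral_add (hcos.const_mul _) (hsin.const_mul _), integral_const_mul, integral_const_mul,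
    integral_const_mul, integral_cos_sq_mul_log_cos, integral_sin_sq_mul_log_cos, h_odd]
  ring

theorem integral_cos_add_sq (φ : ℝ) : ∫ θ in -(π / 2)..π / 2, cos (θ + φ) ^ 2 = π / 2 := by
  rw [integral_comp_add_right (fun t => cos t ^ 2), integral_cos_sq,
    show π / 2 + φ = -(π / 2) + φ + π by ring, cos_add_pi, sin_add_pi]
  ring

theorem integral_cos_add_sq_mul_log_cos_add (φ : ℝ) :
    ∫ θ in -(π / 2)..π / 2, cos (θ + φ) ^ 2 * log (cos (θ + φ)) = π / 4 - π / 2 * log 2 := by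
  have hper : Function.Periodic (fun t => cos t ^ 2 * log (cos t)) π := fun t => by
    simp only [cos_add_pi, neg_sq, log_neg_eq_log]
  rw [integral_comp_add_right (fun t => cos t ^ 2 * log (cos t)), ← integral_cos_sq_mul_log_cos]
  have h := hper.intervalIntegral_add_eq (-(π / 2) + φ) (-(π / 2))
  rwa [show -(π / 2) + φ + π = π / 2 + φ by ring, show -(π / 2) + π = π / 2 by ring] at h

theorem one_add_tan_sq {θ : ℝ} (hθ : cos θ ≠ 0) : 1 + tan θ ^ 2 = (cos θ ^ 2)⁻¹ := by
  rw [← inv_one_add_tan_sq hθ, inv_inv]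

theorem Hfun_tan {θ : ℝ} (hθ : cos θ ≠ 0) : Hfun (tan θ) = 2 / π * cos θ ^ 4 := by
  rw [Hfun, one_add_tan_sq hθ]
  field_simp

theorem integral_Hfun_mul_sq_mul_log (x : ℝ) :
    ∫ y, Hfun y * |x - y| ^ 2 * log |x - y| = (1 + x ^ 2) / 2 * log (1 + x ^ 2) + 1 := by
  simp only [sq_abs, log_abs]
  obtain ⟨φ, hφ⟩ := exists_mul_cos_sub_mul_sin_eq x 1
  set r := √(x ^ 2 + 1 ^ 2)
  have hr0 : 0 < r := sqrt_pos.2 (by positivity)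
  have hr : r ^ 2 = 1 + x ^ 2 := by rw [sq_sqrt (by positivity)]; ring
  have hlogr : log r = log (1 + x ^ 2) / 2 := by rw [log_sqrt (by positivity)]; ring_nf
  have hpoint : EqOn
      (fun θ => (cos θ ^ 2)⁻¹ • (Hfun (tan θ) * (x - tan θ) ^ 2 * log (x - tan θ)))
      (fun θ => 2 / π * (r ^ 2 * log r * cos (θ + φ) ^ 2
        + r ^ 2 * (cos (θ + φ) ^ 2 * log (cos (θ + φ)))
        - (x * cos θ - 1 * sin θ) ^ 2 * log (cos θ))) (Ioo (-(π / 2)) (π / 2)) := by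
    intro θ hθ
    simp only [smul_eq_mul]
    have hc := (cos_pos_of_mem_Ioo hθ).ne'
    have hdiff : x - tan θ = r * cos (θ + φ) * (cos θ)⁻¹ := by
      rw [← hφ, tan_eq_sin_div_cos]; field_simp
    rcases eq_or_ne (cos (θ + φ)) 0 with hu | hu
    · rw [hdiff, hφ θ, hu]
      simp
    · rw [Hfun_tan hc, hdiff, hφ θ, log_mul (by positivity) (inv_ne_zero hc),
        log_mul hr0.ne' hu, log_inv]
      field_simp
      ring
  have hcos_sq : IntervalIntegrable (fun θ => cos (θ + φ) ^ 2) volume (-(π / 2)) (π / 2) :=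
    (continuous_cos.comp (continuous_add_const φ)).pow 2 |>.intervalIntegrable _ _
  have hcos_sq_log : IntervalIntegrable (fun θ => cos (θ + φ) ^ 2 * log (cos (θ + φ))) volume
      (-(π / 2)) (π / 2) := by
    simpa using (intervalIntegrable_mul_log_cos (c := fun t => cos t ^ 2) (by fun_prop)
      (-(π / 2) + φ) (π / 2 + φ)).comp_add_right φ
  rw [integral_eq_intervalIntegral_comp_tan, integral_congr_Ioo_of_le (by linarith [pi_pos]) hpoint,
    integral_const_mul, integral_sub ((hcos_sq.const_mul _).add (hcos_sq_log.const_mul _))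
      (intervalIntegrable_mul_log_cos (by fun_prop) _ _),
    integral_add (hcos_sq.const_mul _) (hcos_sq_log.const_mul _), integral_const_mul,
    integral_const_mul, integral_cos_add_sq_mul_log_cos_add,
    integral_mul_cos_sub_mul_sin_sq_mul_log_cos, integral_cos_add_sq, hr, hlogr]
  field_simp
  ring

theorem integral_Hfun_mul_half_mul_log_add_one :
    ∫ x, Hfun x * ((1 + x ^ 2) / 2 * log (1 + x ^ 2) + 1) = 2 * log 2 + 1 := by
  have hpoint : EqOn
      (fun θ => (cos θ ^ 2)⁻¹ • (Hfun (tan θ) * ((1 + tan θ ^ 2) / 2 * log (1 + tan θ ^ 2) + 1)))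
      (fun θ => 2 / π * (cos θ ^ 2 - log (cos θ))) (Ioo (-(π / 2)) (π / 2)) := by
    intro θ hθ
    have hc := (cos_pos_of_mem_Ioo hθ).ne'
    simp only [smul_eq_mul]
    rw [Hfun_tan hc, one_add_tan_sq hc, log_inv, log_pow]
    field_simp
    ring
  rw [integral_eq_intervalIntegral_comp_tan,
    integral_congr_Ioo_of_le (by linarith [pi_pos]) hpoint, integral_const_mul,
    integral_sub (f := fun θ => cos θ ^ 2) (g := fun θ => log (cos θ))
      ((continuous_cos.pow 2).intervalIntegrable _ _) intervalIntegrable_log_cos,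
    integral_cos_sq, integral_log_cos_neg_pi_div_two_pi_div_two]
  simp only [cos_neg, sin_neg, cos_pi_div_two]
  field_simp
  ring

theorem stmt_9 :
    (∫ x : ℝ, ∫ y : ℝ, Hfun x * Hfun y * |x - y|^2 * Real.log |x - y|)
      = 2 * Real.log 2 + 1 := by
  have hinner : ∀ x, ∫ y, Hfun x * Hfun y * |x - y| ^ 2 * log |x - y|
      = Hfun x * ((1 + x ^ 2) / 2 * log (1 + x ^ 2) + 1) := fun x => by
    rw [← integral_Hfun_mul_sq_mul_log, ← MeasureTheory.integral_const_mul]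
    simp only [mul_assoc]
  rw [funext hinner, integral_Hfun_mul_half_mul_log_add_one]
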